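/- Let F(n) = (n^2+1)·5^n + (n^2+2)·3^n and G(n) = (n^2+1)(n^2+2). Then gcd(F(n), G(n)) = 1 for all natural numbers n. -/

import Mathlib

/-! Since `(n² + 2) - (n² + 1) = 1`, a prime dividing `n² + 1` and `F n` divides `(n² + 2) 3ⁿ`,
hence `3`, and a prime dividing `n² + 2` and `F n` divides `(n² + 1) 5ⁿ`, hence `5`. Neither can
happen: `-1` is not a square mod `3` and `-2` is not a square mod `5`. -/

theorem IsCoprime.mul_add_mul_mul {R : Type*} [CommRing R] {a b x y : R} (hab : IsCoprime a b)
    (hxb : IsCoprime x b) (hya : IsCoprime y a) : IsCoprime (a * x + b * y) (a * b) := by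
  have ha : IsCoprime (a * x + b * y) a := by
    simpa only [add_comm] using (hab.symm.mul_left hya).add_mul_left_left x
  have hb : IsCoprime (a * x + b * y) b := (hab.mul_left hxb).add_mul_left_left y
  exact ha.mul_right hb

theorem Int.isCoprime_three_pow_sq_add_one (k : ℕ) (m : ℤ) : IsCoprime ((3 : ℤ) ^ k) (m ^ 2 + 1) := by
  refine (Int.prime_three.coprime_iff_not_dvd.mpr fun h => ?_).pow_left
  have h3 := (ZMod.intCast_zmod_eq_zero_iff_dvd (m ^ 2 + 1) 3).mpr (mod_cast h)
  push_cast at h3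
  exact (by decide : ∀ x : ZMod 3, x ^ 2 + 1 ≠ 0) _ h3

theorem Int.isCoprime_five_pow_sq_add_two (k : ℕ) (m : ℤ) : IsCoprime ((5 : ℤ) ^ k) (m ^ 2 + 2) := by
  refine ((Nat.prime_iff_prime_int.mp Nat.prime_five).coprime_iff_not_dvd.mpr fun h => ?_).pow_left
  have h5 := (ZMod.intCast_zmod_eq_zero_iff_dvd (m ^ 2 + 2) 5).mpr (mod_cast h)
  push_cast at h5
  exact (by decide : ∀ x : ZMod 5, x ^ 2 + 2 ≠ 0) _ h5

theorem stmt_1 (F G : ℕ → ℤ)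
    (hF : ∀ n, F n = (n ^ 2 + 1) * 5 ^ n + (n ^ 2 + 2) * 3 ^ n)
    (hG : ∀ n, G n = (n ^ 2 + 1) * (n ^ 2 + 2)) :
    ∀ n : ℕ, Int.gcd (F n) (G n) = 1 := by
  intro n
  rw [hF, hG, ← Int.isCoprime_iff_gcd_eq_one]
  exact IsCoprime.mul_add_mul_mul ⟨-1, 1, by ring⟩ (Int.isCoprime_five_pow_sq_add_two n n)
    (Int.isCoprime_three_pow_sq_add_one n n)
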